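/- Let K be a finite abstract simplicial complex and let 𝒱 and 𝒱' be multivector fields on K where 𝒱' is an atomic coarsening of 𝒱 with merged multivector V ∈ 𝒱'. If A ⊆ K is convex and 𝒱-compatible, and if V ⊆ A or V ∩ A = ∅, then (cl(A), mo(A)) is an index pair for inv_𝒱(A) under 𝒱 and also an index pair for inv_{𝒱'}(A) under 𝒱'. -/
import Mathlib
set_option linter.unusedSectionVars false
set_option linter.unusedVariables false


open scoped Classical

namespace CDS

variable {α : Type*} [DecidableEq α]

/-- A finite abstract simplicial complex: a finite collection of nonempty finite
sets (simplices) closed under taking nonempty subsets. -/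
def IsComplex (K : Finset (Finset α)) : Prop :=
  (∀ σ ∈ K, σ.Nonempty) ∧ ∀ σ ∈ K, ∀ τ : Finset α, τ ⊆ σ → τ.Nonempty → τ ∈ K

/-- The closure of `A` in `K`. -/
def cl (K : Finset (Finset α)) (A : Set (Finset α)) : Set (Finset α) :=
  {σ | σ ∈ K ∧ ∃ τ ∈ A, σ ⊆ τ}

/-- `A` is closed in `K`. -/
def IsClosedIn (K : Finset (Finset α)) (A : Set (Finset α)) : Prop :=
  A = cl K A

/-- The mouth of `A` in `K`. -/
def mo (K : Finset (Finset α)) (A : Set (Finset α)) : Set (Finset α) :=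
  cl K A \ A

/-- `A` is convex with respect to the face poset of `K`. -/
def IsConvex (K : Finset (Finset α)) (A : Set (Finset α)) : Prop :=
  ∀ σ ∈ A, ∀ τ ∈ A, ∀ ρ : Finset α, ρ ∈ K → σ ⊆ ρ → ρ ⊆ τ → ρ ∈ A

/-- A multivector field on `K`: a partition of `K` into convex subsets
(multivectors). -/
structure MVF (K : Finset (Finset α)) where
  vecs : Set (Set (Finset α))
  sub : ∀ V ∈ vecs, V ⊆ (K : Set (Finset α))
  convex : ∀ V ∈ vecs, IsConvex K V
  nonempty : ∀ V ∈ vecs, V.Nonempty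
  cover : ∀ σ ∈ K, ∃ V ∈ vecs, σ ∈ V
  disjoint : ∀ V ∈ vecs, ∀ W ∈ vecs, (V ∩ W).Nonempty → V = W

variable {K : Finset (Finset α)}

/-- `[σ]_𝒱`, the multivector of `𝒱` containing `σ`. -/
def mv (𝒱 : MVF K) (σ : Finset α) : Set (Finset α) :=
  ⋃₀ {V | V ∈ 𝒱.vecs ∧ σ ∈ V}

/-- The induced multivalued map `F_𝒱` on simplices. -/
def Fv (𝒱 : MVF K) (σ : Finset α) : Set (Finset α) :=
  cl K {σ} ∪ mv 𝒱 σ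

/-- `F_𝒱` applied to a set. -/
def Fs (𝒱 : MVF K) (A : Set (Finset α)) : Set (Finset α) :=
  ⋃ σ ∈ A, Fv 𝒱 σ

/-- `ρ` is a path of length `n` in `N`. -/
def IsPathIn (𝒱 : MVF K) (N : Set (Finset α)) (n : ℕ) (ρ : ℕ → Finset α) : Prop :=
  (∀ i < n, ρ (i + 1) ∈ Fv 𝒱 (ρ i)) ∧ ∀ i ≤ n, ρ i ∈ N

/-- `ρ` is a (full) solution. -/
def IsSolution (𝒱 : MVF K) (ρ : ℤ → Finset α) : Prop :=
  ∀ i : ℤ, ρ (i + 1) ∈ Fv 𝒱 (ρ i)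

/-- The mod 2 simplicial boundary operator (summing over faces in `K`). -/
def bdry (K : Finset (Finset α)) (c : Finset α → ZMod 2) (τ : Finset α) : ZMod 2 :=
  ∑ σ ∈ K, if τ ⊆ σ ∧ σ.card = τ.card + 1 then c σ else 0

/-- Relative `n`-chains of the pair `(P, E)`: mod 2 chains supported on
`(n+1)`-element simplices of `P \ E`. -/
def chains (P E : Set (Finset α)) (n : ℕ) : Set (Finset α → ZMod 2) :=
  {c | ∀ σ, c σ ≠ 0 → σ ∈ P \ E ∧ σ.card = n + 1}

/-- The relative boundary operator of the pair `(P, E)`. -/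
noncomputable def relBdry (K : Finset (Finset α)) (P E : Set (Finset α))
    (c : Finset α → ZMod 2) : Finset α → ZMod 2 :=
  (P \ E).indicator (bdry K c)

/-- The relative simplicial homology (with ℤ/2 coefficients) of the pair
`(P, E)` is nonzero: in some dimension there is a relative cycle that is not a
relative boundary. -/
def HasNonzeroHomology (K : Finset (Finset α)) (P E : Set (Finset α)) : Prop :=
  ∃ (n : ℕ) (c : Finset α → ZMod 2), c ∈ chains P E n ∧ relBdry K P E c = 0 ∧
    ∀ d ∈ chains P E (n + 1), relBdry K P E d ≠ c

/-- A multivector `V` is critical if `H(cl V, mo V) ≠ 0`. -/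
def IsCritical (K : Finset (Finset α)) (V : Set (Finset α)) : Prop :=
  HasNonzeroHomology K (cl K V) (mo K V)

/-- Essential solutions. -/
def IsEssential (𝒱 : MVF K) (ρ : ℤ → Finset α) : Prop :=
  IsSolution 𝒱 ρ ∧ ∀ i : ℤ, ¬ IsCritical K (mv 𝒱 (ρ i)) →
    (∃ j, j < i ∧ mv 𝒱 (ρ j) ≠ mv 𝒱 (ρ i)) ∧
    (∃ j, i < j ∧ mv 𝒱 (ρ j) ≠ mv 𝒱 (ρ i))

/-- The invariant part of `A`: all simplices through which an essential
solution with values in `A` passes. -/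
def invPart (𝒱 : MVF K) (A : Set (Finset α)) : Set (Finset α) :=
  {σ | ∃ ρ : ℤ → Finset α, IsEssential 𝒱 ρ ∧ (∀ i, ρ i ∈ A) ∧ ∃ i, ρ i = σ}

/-- `S` is an invariant set. -/
def IsInvariantSet (𝒱 : MVF K) (S : Set (Finset α)) : Prop :=
  invPart 𝒱 S = S

/-- The closed set `N` isolates `S`. -/
def Isolates (𝒱 : MVF K) (N S : Set (Finset α)) : Prop :=
  IsClosedIn K N ∧ Fs 𝒱 S ⊆ N ∧
    ∀ (n : ℕ) (ρ : ℕ → Finset α), IsPathIn 𝒱 N n ρ → ρ 0 ∈ S → ρ n ∈ S →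
      ∀ i ≤ n, ρ i ∈ S

/-- `S` is an isolated invariant set. -/
def IsIsolatedInvariantSet (𝒱 : MVF K) (S : Set (Finset α)) : Prop :=
  IsInvariantSet 𝒱 S ∧ ∃ N, Isolates 𝒱 N S

/-- `A` is `𝒱`-compatible: a union of multivectors of `𝒱`. -/
def IsCompatible (𝒱 : MVF K) (A : Set (Finset α)) : Prop :=
  ∃ R ⊆ 𝒱.vecs, A = ⋃₀ R

/-- `(P, E)` is an index pair for `S` under `𝒱`. -/
def IsIndexPair (𝒱 : MVF K) (S P E : Set (Finset α)) : Prop :=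
  IsClosedIn K P ∧ IsClosedIn K E ∧ E ⊆ P ∧
    Fs 𝒱 (P \ E) ⊆ P ∧ Fs 𝒱 E ∩ P ⊆ E ∧ invPart 𝒱 (P \ E) = S

/-- `(P, E)` is an index pair for `S` in `N` under `𝒱`. -/
def IsIndexPairIn (𝒱 : MVF K) (N S P E : Set (Finset α)) : Prop :=
  IsClosedIn K P ∧ IsClosedIn K E ∧ E ⊆ P ∧
    Fs 𝒱 (P \ E) ⊆ N ∧ Fs 𝒱 E ∩ N ⊆ E ∧ Fs 𝒱 P ∩ N ⊆ P ∧
    invPart 𝒱 (P \ E) = S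

/-- The push forward `pf_𝒱(A, N)` of `A` in `N`. -/
def pf (𝒱 : MVF K) (A N : Set (Finset α)) : Set (Finset α) :=
  {σ | σ ∈ N ∧ ∃ (n : ℕ) (ρ : ℕ → Finset α), IsPathIn 𝒱 N n ρ ∧ ρ 0 ∈ A ∧ ρ n = σ}

/-- `𝒲` is an atomic refinement of `𝒱` (equivalently, `𝒱` is an atomic
coarsening of `𝒲`). -/
def AtomicRefinement (𝒲 𝒱 : MVF K) : Prop :=
  (∀ W ∈ 𝒲.vecs, ∃ V ∈ 𝒱.vecs, W ⊆ V) ∧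
    (𝒱.vecs \ 𝒲.vecs).ncard = 1 ∧ (𝒲.vecs \ 𝒱.vecs).ncard = 2

/-- `𝒱` and `𝒲` are atomic rearrangements of each other. -/
def AtomicRearrangement (𝒱 𝒲 : MVF K) : Prop :=
  AtomicRefinement 𝒲 𝒱 ∨ AtomicRefinement 𝒱 𝒲

/-- `⟨B⟩_𝒱`: the intersection of all convex and `𝒱`-compatible subsets of `K`
containing `B`. -/
def hull (𝒱 : MVF K) (B : Set (Finset α)) : Set (Finset α) :=
  ⋂₀ {A | A ⊆ (K : Set (Finset α)) ∧ IsConvex K A ∧ IsCompatible 𝒱 A ∧ B ⊆ A}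

lemma subset_cl {A : Set (Finset α)} (hAK : A ⊆ (K : Set (Finset α))) :
    A ⊆ cl K A := fun σ hσ => ⟨hAK hσ, σ, hσ, subset_rfl⟩

lemma cl_diff_mo {A : Set (Finset α)} (hAK : A ⊆ (K : Set (Finset α))) :
    cl K A \ mo K A = A := by
  ext σ
  simp only [mo, Set.mem_diff]
  constructor
  · rintro ⟨h1, h2⟩
    by_contra h
    exact h2 ⟨h1, h⟩
  · intro h
    exact ⟨subset_cl hAK h, fun hc => hc.2 h⟩

lemma cl_closed (A : Set (Finset α)) : IsClosedIn K (cl K A) := by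
  unfold IsClosedIn
  ext σ
  constructor
  · rintro ⟨hσK, τ, hτ, hst⟩
    exact ⟨hσK, σ, ⟨hσK, τ, hτ, hst⟩, subset_rfl⟩
  · rintro ⟨hσK, τ, ⟨hτK, τ', hτ', h1⟩, h2⟩
    exact ⟨hσK, τ', hτ', h2.trans h1⟩

lemma mo_closed {A : Set (Finset α)} (hconv : IsConvex K A) :
    IsClosedIn K (mo K A) := by
  unfold IsClosedIn
  ext σ
  constructor
  · rintro ⟨⟨hσK, hτ⟩, hσA⟩
    exact ⟨hσK, σ, ⟨⟨hσK, hτ⟩, hσA⟩, subset_rfl⟩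
  · rintro ⟨hσK, τ, ⟨⟨hτK, τ', hτ', hττ'⟩, hτA⟩, hστ⟩
    exact ⟨⟨hσK, τ', hτ', hστ.trans hττ'⟩,
      fun hσA => hτA (hconv σ hσA τ' hτ' τ hτK hστ hττ')⟩

lemma mv_subset_of_compat {𝒱 : MVF K} {A : Set (Finset α)}
    (hcomp : IsCompatible 𝒱 A) {σ : Finset α} (hσ : σ ∈ A) :
    mv 𝒱 σ ⊆ A := by
  obtain ⟨R, hR, hA⟩ := hcomp
  rintro τ ⟨V₀, ⟨hV₀, hσV₀⟩, hτV₀⟩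
  rw [hA] at hσ ⊢
  obtain ⟨W, hWR, hσW⟩ := hσ
  have : V₀ = W := 𝒱.disjoint V₀ hV₀ W (hR hWR) ⟨σ, hσV₀, hσW⟩
  exact ⟨W, hWR, this ▸ hτV₀⟩

lemma mem_mv_symm {𝒱 : MVF K} {σ τ : Finset α} (h : τ ∈ mv 𝒱 σ) :
    σ ∈ mv 𝒱 τ := by
  obtain ⟨V₀, ⟨hV₀, hσV₀⟩, hτV₀⟩ := h
  exact ⟨V₀, ⟨hV₀, hτV₀⟩, hσV₀⟩

lemma indexPair_of_compat {A : Set (Finset α)} (𝒱 : MVF K)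
    (hAK : A ⊆ (K : Set (Finset α))) (hconv : IsConvex K A)
    (hcomp : IsCompatible 𝒱 A) :
    IsIndexPair 𝒱 (invPart 𝒱 A) (cl K A) (mo K A) := by
  have hdm : cl K A \ mo K A = A := cl_diff_mo hAK
  refine ⟨cl_closed A, mo_closed hconv, fun σ hσ => hσ.1, ?_, ?_, by rw [hdm]⟩
  · -- Fs 𝒱 (cl K A \ mo K A) ⊆ cl K A
    rw [hdm]
    rintro τ hτ
    simp only [Fs, Set.mem_iUnion] at hτ
    obtain ⟨σ, hσA, hτF⟩ := hτ
    rcases hτF with hcl | hmv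
    · obtain ⟨hτK, σ', hσ', hsub⟩ := hcl
      rw [Set.mem_singleton_iff] at hσ'
      exact ⟨hτK, σ, hσA, hσ' ▸ hsub⟩
    · exact subset_cl hAK (mv_subset_of_compat hcomp hσA hmv)
  · -- Fs 𝒱 (mo K A) ∩ cl K A ⊆ mo K A
    rintro τ ⟨hτF, hτcl⟩
    simp only [Fs, Set.mem_iUnion] at hτF
    obtain ⟨σ, ⟨hσcl, hσA⟩, hτF⟩ := hτF
    refine ⟨hτcl, fun hτA => hσA ?_⟩
    rcases hτF with hcl | hmv
    · obtain ⟨hτK, σ', hσ', hsub⟩ := hcl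
      rw [Set.mem_singleton_iff] at hσ'
      obtain ⟨hσK, τ', hτ', hστ'⟩ := hσcl
      exact hconv τ hτA τ' hτ' σ hσK (hσ' ▸ hsub) hστ'
    · exact mv_subset_of_compat hcomp hτA (mem_mv_symm hmv)

/-- If `𝒱'` is an atomic coarsening of `𝒱` with merged multivector `V`, `A` is
convex and `𝒱`-compatible, and `V ⊆ A` or `V ∩ A = ∅`, then `(cl A, mo A)` is
an index pair for `inv_𝒱(A)` under `𝒱` and for `inv_𝒱'(A)` under `𝒱'`. -/
theorem coarsening_indexPair (hK : IsComplex K) (𝒱 𝒱' : MVF K)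
    (hco : AtomicRefinement 𝒱 𝒱') (V : Set (Finset α))
    (hV : V ∈ 𝒱'.vecs \ 𝒱.vecs) (A : Set (Finset α))
    (hAK : A ⊆ (K : Set (Finset α)))
    (hconv : IsConvex K A) (hcomp : IsCompatible 𝒱 A)
    (hVA : V ⊆ A ∨ V ∩ A = ∅) :
    IsIndexPair 𝒱 (invPart 𝒱 A) (cl K A) (mo K A) ∧
      IsIndexPair 𝒱' (invPart 𝒱' A) (cl K A) (mo K A) := by

  have hcomp' : IsCompatible 𝒱' A := by
    obtain ⟨R, hR, hA⟩ := hcomp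
    refine ⟨{W | W ∈ 𝒱'.vecs ∧ W ⊆ A}, fun W hW => hW.1, ?_⟩
    ext σ
    constructor
    · intro hσ
      have hσ' := hσ
      rw [hA] at hσ'
      obtain ⟨W, hWR, hσW⟩ := hσ'
      have hWv : W ∈ 𝒱.vecs := hR hWR
      have hWA : W ⊆ A := by
        rw [hA]; exact Set.subset_sUnion_of_mem hWR
      obtain ⟨V₁, hV₁, hWV₁⟩ := hco.1 W hWv
      by_cases hEq : V₁ = V
      · subst hEq
        have hVsubA : V₁ ⊆ A := by
          rcases hVA with h | h
          · exact h
          · exact absurd (Set.eq_empty_iff_forall_notMem.mp h σ)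
              (fun hc => hc ⟨hWV₁ hσW, hσ⟩)
        exact ⟨V₁, ⟨hV.1, hVsubA⟩, hWV₁ hσW⟩
      · have hV₁v : V₁ ∈ 𝒱.vecs := by
          by_contra h
          obtain ⟨a, ha⟩ := Set.ncard_eq_one.mp hco.2.1
          have h1 : V = a := by have := hV; rw [ha] at this; exact this
          have h2 : V₁ = a := by
            have : V₁ ∈ 𝒱'.vecs \ 𝒱.vecs := ⟨hV₁, h⟩
            rw [ha] at this; exact this
          exact hEq (h2.trans h1.symm)
        have hWeq : W = V₁ := 𝒱.disjoint W hWv V₁ hV₁v ⟨σ, hσW, hWV₁ hσW⟩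
        exact ⟨V₁, ⟨hV₁, hWeq ▸ hWA⟩, hWV₁ hσW⟩
    · rintro ⟨W, ⟨_, hWA⟩, hσW⟩
      exact hWA hσW
  exact ⟨indexPair_of_compat 𝒱 hAK hconv hcomp,
    indexPair_of_compat 𝒱' hAK hconv hcomp'⟩

end CDS
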